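/- arXiv:1101.2915 — 2 statements merged into one kernel-verified Lean document; each statement's English description precedes it below -/
import Mathlib

section
/- Let α ∈ (1/√2, 1) and let f be the full-branch symmetric Lorenz map with parameter a = 2^α (so that f(0⁺) = −1/2, f(0⁻) = 1/2, f(1/2) = 1/2, f(−1/2) = −1/2 and f′(x) ≥ 2α > √2 on the domain). Then f is locally eventually onto: for every nondegenerate open interval J ⊆ (−1/2, 1/2) there exist an integer n ≥ 1 and an open subinterval J₀ ⊆ J such that 0 ∉ f^{k}(J₀) for all 0 ≤ k < n and f^{n}(J₀) equals (0, 1/2) or (−1/2, 0). -/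
/-- The symmetric Lorenz one-dimensional map with parameters `a > 0`,
`α ∈ (0,1)`: `f(x) = a·x^α − 1/2` for `x > 0` and `f(x) = −a·(−x)^α + 1/2`
for `x < 0`. -/
noncomputable def lorenzMap (a α : ℝ) (x : ℝ) : ℝ :=
  if 0 < x then a * x ^ α - 1 / 2 else -(a * (-x) ^ α) + 1 / 2

/-!
Both branches of the map expand lengths by at least `λ = 2α > 1`. An interval inside one branch
is pulled back from its image, which is longer by the factor `λ`, so after finitely many steps the
image of an interval either meets the singularity `0` or is too long to fit into `[-1/2, 1/2]`.
An interval `(u, v)` with `u < 0 < v` contains `(0, v)`, whose image `(-1/2, f v)` is anchored at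
the fixed point `-1/2`. Images of anchored intervals stay anchored and grow by `λ` until they
reach past `0`; then they contain the preimage `(-x₀, 0)` of `(0, 1/2)`.
-/

open Set

def EventuallyOntoHalf (f : ℝ → ℝ) (u v : ℝ) : Prop :=
  ∃ n : ℕ, 1 ≤ n ∧ ∃ c₀ d₀ : ℝ, c₀ < d₀ ∧ Ioo c₀ d₀ ⊆ Ioo u v ∧
    (∀ k < n, (0 : ℝ) ∉ f^[k] '' Ioo c₀ d₀) ∧
    (f^[n] '' Ioo c₀ d₀ = Ioo 0 (1 / 2) ∨ f^[n] '' Ioo c₀ d₀ = Ioo (-(1 / 2)) 0)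

structure IsBranch (f φ : ℝ → ℝ) (a b : ℝ) : Prop where
  continuousOn : ContinuousOn φ (Icc a b)
  strictMonoOn : StrictMonoOn φ (Icc a b)
  eqOn : EqOn f φ (Ioo a b)

section Branches

variable {f φ : ℝ → ℝ} {a b u v : ℝ}

theorem EventuallyOntoHalf.mono (h : EventuallyOntoHalf f u v) {u' v' : ℝ}
    (hsub : Ioo u v ⊆ Ioo u' v') : EventuallyOntoHalf f u' v' := by
  obtain ⟨n, hn, c₀, d₀, hcd, hc₀d₀, havoid, honto⟩ := h
  exact ⟨n, hn, c₀, d₀, hcd, hc₀d₀.trans hsub, havoid, honto⟩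

theorem EventuallyOntoHalf.of_image (huv : u < v) (h0 : (0 : ℝ) ∉ Ioo u v)
    (honto : f '' Ioo u v = Ioo 0 (1 / 2) ∨ f '' Ioo u v = Ioo (-(1 / 2)) 0) :
    EventuallyOntoHalf f u v := by
  refine ⟨1, le_rfl, u, v, huv, subset_rfl, ?_, by simpa using honto⟩
  intro k hk
  obtain rfl : k = 0 := by omega
  simpa using h0

theorem IsBranch.image_Ioo (hB : IsBranch f φ a b) (hu : a ≤ u) (huv : u ≤ v) (hv : v ≤ b) :
    f '' Ioo u v = Ioo (φ u) (φ v) := by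
  have hsub : Icc u v ⊆ Icc a b := Icc_subset_Icc hu hv
  rw [(hB.eqOn.mono (Ioo_subset_Ioo hu hv)).image_eq]
  exact (hB.continuousOn.mono hsub).image_Ioo_of_strictMonoOn huv (hB.strictMonoOn.mono hsub)

theorem IsBranch.eventuallyOntoHalf (hB : IsBranch f φ a b) (h0 : (0 : ℝ) ∉ Ioo a b)
    (hu : a ≤ u) (huv : u < v) (hv : v ≤ b) (h : EventuallyOntoHalf f (φ u) (φ v)) :
    EventuallyOntoHalf f u v := by
  obtain ⟨n, hn, c₀, d₀, hcd₀, hsub, havoid, honto⟩ := h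
  obtain ⟨hc₀, hd₀⟩ := (Ioo_subset_Ioo_iff hcd₀).1 hsub
  have hcont := hB.continuousOn.mono (Icc_subset_Icc hu hv)
  obtain ⟨c, hc, rfl⟩ := intermediate_value_Icc huv.le hcont ⟨hc₀, hcd₀.le.trans hd₀⟩
  obtain ⟨d, hd, rfl⟩ := intermediate_value_Icc huv.le hcont ⟨hc₀.trans hcd₀.le, hd₀⟩
  have hcd : c < d := (hB.strictMonoOn.lt_iff_lt ⟨hu.trans hc.1, hc.2.trans hv⟩
    ⟨hu.trans hd.1, hd.2.trans hv⟩).1 hcd₀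
  have himage := hB.image_Ioo (hu.trans hc.1) hcd.le (hd.2.trans hv)
  refine ⟨n + 1, by omega, c, d, hcd, Ioo_subset_Ioo hc.1 hd.2, ?_, ?_⟩
  · rintro (_ | k) hk
    · exact fun hmem ↦ h0 (Ioo_subset_Ioo (hu.trans hc.1) (hd.2.trans hv) (by simpa using hmem))
    · rw [Function.iterate_succ, image_comp, himage]
      exact havoid k (by omega)
  · rwa [Function.iterate_succ, image_comp, himage]

end Branches

theorem interval_induction_of_expanding {S Q : ℝ → ℝ → Prop} {r B : ℝ} (hr : 1 < r)
    (hS : ∀ u v, S u v → 0 < v - u ∧ v - u ≤ B)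
    (hstep : ∀ u v, S u v → Q u v ∨ ∃ u' v', S u' v' ∧ r * (v - u) ≤ v' - u' ∧ (Q u' v' → Q u v))
    {u v : ℝ} (huv : S u v) : Q u v := by
  have key : ∀ n : ℕ, ∀ u v, S u v → B < r ^ n * (v - u) → Q u v := by
    intro n
    induction n with
    | zero =>
      intro u v huv hlong
      linarith [(hS u v huv).2]
    | succ n ih =>
      intro u v huv hlong
      rcases hstep u v huv with hQ | ⟨u', v', huv', hexp, hpull⟩
      · exact hQ
      · refine hpull (ih u' v' huv' ?_)
        calc B < r ^ (n + 1) * (v - u) := hlong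
          _ = r ^ n * (r * (v - u)) := by ring
          _ ≤ r ^ n * (v' - u') := by gcongr
  have hpos := (hS u v huv).1
  obtain ⟨n, hn⟩ := pow_unbounded_of_one_lt (B / (v - u)) hr
  exact key n u v huv (by rwa [div_lt_iff₀ hpos] at hn)

theorem Real.mul_sub_le_rpow_sub_rpow {α a b : ℝ} (hα0 : 0 ≤ α) (hα1 : α ≤ 1)
    (ha : 0 ≤ a) (hab : a ≤ b) (hb : b ≤ 1) : α * (b - a) ≤ b ^ α - a ^ α := by
  rcases hab.eq_or_lt with rfl | hab
  · simp
  have hb0 : 0 < b := ha.trans_lt hab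
  set t := a / b
  have hat : a = b * t := by rw [mul_div_cancel₀ a hb0.ne']
  have hbernoulli : t ^ α ≤ 1 + α * (t - 1) := by
    simpa using rpow_one_add_le_one_add_mul_self (s := t - 1) (by simp [t]; positivity) hα0 hα1
  have hbα : b ≤ b ^ α := Real.self_le_rpow_of_le_one hb0.le hb hα1
  have ht1 : 0 ≤ 1 - t := by rw [sub_nonneg, div_le_one hb0]; exact hab.le
  calc α * (b - a) = α * (1 - t) * b := by rw [hat]; ring
    _ ≤ α * (1 - t) * b ^ α := by gcongr
    _ ≤ b ^ α * (1 - t ^ α) := by nlinarith [Real.rpow_nonneg hb0.le α]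
    _ = b ^ α - a ^ α := by rw [hat, Real.mul_rpow hb0.le (by positivity)]; ring

noncomputable def lorenzBranch (α x : ℝ) : ℝ := (2 * x) ^ α - 1 / 2

section Lorenz

variable {α : ℝ}

theorem lorenzMap_of_pos {x : ℝ} (hx : 0 < x) : lorenzMap (2 ^ α) α x = lorenzBranch α x := by
  rw [lorenzMap, if_pos hx, lorenzBranch, Real.mul_rpow zero_le_two hx.le]

theorem lorenzMap_of_nonpos {x : ℝ} (hx : x ≤ 0) :
    lorenzMap (2 ^ α) α x = -lorenzBranch α (-x) := by
  rw [lorenzMap, if_neg hx.not_gt, lorenzBranch, Real.mul_rpow zero_le_two (neg_nonneg.2 hx)]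
  ring

theorem lorenzBranch_zero (hα : α ≠ 0) : lorenzBranch α 0 = -(1 / 2) := by
  simp [lorenzBranch, Real.zero_rpow hα]

theorem lorenzBranch_mem_Icc (hα : 0 ≤ α) {x : ℝ} (hx0 : 0 ≤ x) (hx : x ≤ 1 / 2) :
    -(1 / 2) ≤ lorenzBranch α x ∧ lorenzBranch α x ≤ 1 / 2 := by
  have h2x : 0 ≤ 2 * x := by linarith
  rw [lorenzBranch]
  constructor <;> linarith [Real.rpow_nonneg h2x α, Real.rpow_le_one h2x (by linarith) hα]

theorem lorenzBranch_half : lorenzBranch α (1 / 2) = 1 / 2 := by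
  norm_num [lorenzBranch]

theorem continuous_lorenzBranch (hα : 0 ≤ α) : Continuous (lorenzBranch α) :=
  ((continuous_const.mul continuous_id).rpow_const fun _ ↦ Or.inr hα).sub continuous_const

theorem strictMonoOn_lorenzBranch (hα : 0 < α) : StrictMonoOn (lorenzBranch α) (Ici 0) :=
  fun _ hx _ _ hxy ↦ sub_lt_sub_right
    (Real.rpow_lt_rpow (mul_nonneg zero_le_two hx) (by linarith) hα) _

theorem mul_sub_le_lorenzBranch_sub (hα0 : 0 ≤ α) (hα1 : α ≤ 1) {u v : ℝ} (hu : 0 ≤ u)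
    (huv : u ≤ v) (hv : v ≤ 1 / 2) :
    2 * α * (v - u) ≤ lorenzBranch α v - lorenzBranch α u := by
  have := Real.mul_sub_le_rpow_sub_rpow hα0 hα1 (by linarith : 0 ≤ 2 * u) (by linarith)
    (by linarith : 2 * v ≤ 1)
  simp only [lorenzBranch]
  linarith

theorem isBranch_lorenzMap_right (hα : 0 < α) :
    IsBranch (lorenzMap (2 ^ α) α) (lorenzBranch α) 0 (1 / 2) where
  continuousOn := (continuous_lorenzBranch hα.le).continuousOn
  strictMonoOn := (strictMonoOn_lorenzBranch hα).mono Icc_subset_Ici_self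
  eqOn _ hx := lorenzMap_of_pos hx.1

theorem isBranch_lorenzMap_left (hα : 0 < α) :
    IsBranch (lorenzMap (2 ^ α) α) (fun x ↦ -lorenzBranch α (-x)) (-(1 / 2)) 0 where
  continuousOn := ((continuous_lorenzBranch hα.le).comp continuous_neg).neg.continuousOn
  strictMonoOn _ hx _ hy hxy := neg_lt_neg <| strictMonoOn_lorenzBranch hα
    (neg_nonneg.2 hy.2) (neg_nonneg.2 hx.2) (neg_lt_neg hxy)
  eqOn _ hx := lorenzMap_of_nonpos hx.2.le

theorem eventuallyOntoHalf_lorenzMap_neg_half_of_pos (hα0 : 0 < α) {t : ℝ} (ht : 0 < t) :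
    EventuallyOntoHalf (lorenzMap (2 ^ α) α) (-(1 / 2)) t := by
  obtain ⟨x₀, hx₀, hzero⟩ : ∃ x₀ ∈ Ioo (0 : ℝ) (1 / 2), lorenzBranch α x₀ = 0 := by
    apply intermediate_value_Ioo (by norm_num) (continuous_lorenzBranch hα0.le).continuousOn
    rw [lorenzBranch_zero hα0.ne', lorenzBranch_half]
    norm_num
  have honto : lorenzMap (2 ^ α) α '' Ioo (-x₀) 0 = Ioo 0 (1 / 2) := by
    rw [(isBranch_lorenzMap_left hα0).image_Ioo (by linarith [hx₀.2]) (by linarith [hx₀.1])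
      le_rfl]
    simp [hzero, lorenzBranch_zero hα0.ne']
  exact (EventuallyOntoHalf.of_image (by linarith [hx₀.1]) (by simp) (.inl honto)).mono
    (Ioo_subset_Ioo (by linarith [hx₀.2]) ht.le)

variable (hα : 1 / 2 < α) (hα1 : α < 1)
include hα hα1

/-- Intervals anchored at the fixed point `-1/2` stay anchored under the left branch. -/
theorem eventuallyOntoHalf_lorenzMap_neg_half {t : ℝ} (ht : -(1 / 2) < t) (ht' : t ≤ 1 / 2) :
    EventuallyOntoHalf (lorenzMap (2 ^ α) α) (-(1 / 2)) t := by
  have hα0 : 0 < α := by linarith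
  have hB := isBranch_lorenzMap_left hα0
  refine interval_induction_of_expanding (S := fun u v ↦ u = -(1 / 2) ∧ u < v ∧ v ≤ 1 / 2) (B := 1)
    (by linarith : 1 < 2 * α) (fun u v ⟨hu, huv, hv⟩ ↦ ⟨by linarith, by linarith⟩) ?_ ⟨rfl, ht, ht'⟩
  rintro u v ⟨rfl, huv, hv⟩
  rcases lt_or_ge 0 v with hv0 | hv0
  · exact .inl (eventuallyOntoHalf_lorenzMap_neg_half_of_pos hα0 hv0)
  refine .inr ⟨_, _, ⟨?_, hB.strictMonoOn ⟨le_rfl, by linarith⟩ ⟨huv.le, hv0⟩ huv, ?_⟩, ?_,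
    hB.eventuallyOntoHalf (by simp) le_rfl huv hv0⟩
  · rw [neg_neg, lorenzBranch_half]
  · linarith [(lorenzBranch_mem_Icc hα0.le (neg_nonneg.2 hv0) (by linarith)).1]
  · rw [neg_neg, lorenzBranch_half]
    linarith [mul_sub_le_lorenzBranch_sub hα0.le hα1.le (neg_nonneg.2 hv0) (by linarith) le_rfl,
      lorenzBranch_half (α := α)]

theorem eventuallyOntoHalf_lorenzMap {u v : ℝ} (hu : -(1 / 2) ≤ u) (huv : u < v)
    (hv : v ≤ 1 / 2) : EventuallyOntoHalf (lorenzMap (2 ^ α) α) u v := by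
  have hα0 : 0 < α := by linarith
  have hR := isBranch_lorenzMap_right hα0
  have hL := isBranch_lorenzMap_left hα0
  refine interval_induction_of_expanding (S := fun u v ↦ -(1 / 2) ≤ u ∧ u < v ∧ v ≤ 1 / 2) (B := 1)
    (by linarith : 1 < 2 * α) (fun u v ⟨hu, huv, hv⟩ ↦ ⟨by linarith, by linarith⟩) ?_ ⟨hu, huv, hv⟩
  rintro u v ⟨hu, huv, hv⟩
  rcases le_or_gt 0 u with hu0 | hu0
  · have hu' := lorenzBranch_mem_Icc hα0.le hu0 (by linarith)
    have hv' := lorenzBranch_mem_Icc hα0.le (by linarith) hv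
    exact .inr ⟨_, _, ⟨hu'.1, hR.strictMonoOn ⟨hu0, by linarith⟩ ⟨by linarith, hv⟩ huv, hv'.2⟩,
      mul_sub_le_lorenzBranch_sub hα0.le hα1.le hu0 huv.le hv,
      hR.eventuallyOntoHalf (by simp) hu0 huv hv⟩
  rcases le_or_gt v 0 with hv0 | hv0
  · refine .inr ⟨_, _, ⟨?_, hL.strictMonoOn ⟨hu, by linarith⟩ ⟨by linarith, hv0⟩ huv, ?_⟩, ?_,
      hL.eventuallyOntoHalf (by simp) hu huv hv0⟩
    · linarith [(lorenzBranch_mem_Icc hα0.le (by linarith : 0 ≤ -u) (by linarith)).2]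
    · linarith [(lorenzBranch_mem_Icc hα0.le (neg_nonneg.2 hv0) (by linarith)).1]
    · linarith [mul_sub_le_lorenzBranch_sub hα0.le hα1.le (neg_nonneg.2 hv0) (neg_le_neg huv.le)
        (by linarith)]
  have hanchored := eventuallyOntoHalf_lorenzMap_neg_half hα hα1
    (lorenzBranch_zero hα0.ne' ▸ strictMonoOn_lorenzBranch hα0 (mem_Ici.2 le_rfl) hv0.le hv0)
    (lorenzBranch_mem_Icc hα0.le hv0.le hv).2
  rw [← lorenzBranch_zero hα0.ne'] at hanchored
  exact .inl ((hR.eventuallyOntoHalf (by simp) le_rfl hv0 hv hanchored).mono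
    (Ioo_subset_Ioo hu0.le le_rfl))

end Lorenz

theorem half_lt_of_inv_sqrt_two_lt {α : ℝ} (hα : 1 / Real.sqrt 2 < α) : 1 / 2 < α := by
  have : 1 / 2 < 1 / Real.sqrt 2 := by
    rw [one_div_lt_one_div (by norm_num) (by positivity)]
    nlinarith [Real.sq_sqrt (zero_le_two : (0 : ℝ) ≤ 2), Real.sqrt_nonneg 2]
  linarith

/-- for `α ∈ (1/√2, 1)` the full-branch symmetric Lorenz map
with parameter `a = 2^α` is locally eventually onto: every nondegenerate open
subinterval of `(−1/2,1/2)` contains an open subinterval whose iterates avoid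
the singularity `0` up to some time `n ≥ 1` at which it is mapped exactly
onto `(0,1/2)` or `(−1/2,0)`. -/
theorem lorenzMap_locally_eventually_onto
    (α : ℝ) (hα0 : 1 / Real.sqrt 2 < α) (hα1 : α < 1) :
    ∀ c d : ℝ, c < d → Set.Ioo c d ⊆ Set.Ioo (-(1 / 2) : ℝ) (1 / 2) →
      ∃ n : ℕ, 1 ≤ n ∧ ∃ c₀ d₀ : ℝ, c₀ < d₀ ∧
        Set.Ioo c₀ d₀ ⊆ Set.Ioo c d ∧
        (∀ k < n, (0 : ℝ) ∉ (lorenzMap ((2 : ℝ) ^ α) α)^[k] '' Set.Ioo c₀ d₀) ∧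
        ((lorenzMap ((2 : ℝ) ^ α) α)^[n] '' Set.Ioo c₀ d₀
            = Set.Ioo (0 : ℝ) (1 / 2) ∨
         (lorenzMap ((2 : ℝ) ^ α) α)^[n] '' Set.Ioo c₀ d₀
            = Set.Ioo (-(1 / 2) : ℝ) 0) := by
  intro c d hcd hsub
  obtain ⟨hc, hd⟩ := (Ioo_subset_Ioo_iff hcd).1 hsub
  exact eventuallyOntoHalf_lorenzMap (half_lt_of_inv_sqrt_two_lt hα0) hα1 hc hcd hd
end

section
/- Let S be a compact metric space, P : S → S Borel measurable, T a metric space, π : S → T a Borel surjection, f : T → T Borel with f ∘ π = π ∘ P, and assume uniform fiber contraction: sup_{t ∈ T} diam(Pⁿ(π^{−1}{t})) → 0 as n → ∞. Let ν be an f-invariant Borel probability measure on T, and let (ω_t)_{t∈T} and (ω′_t)_{t∈T} be two Markov kernels from T to S such that ω_t and ω′_t are Borel probability measures concentrated on the fiber π^{−1}{t} for every t. Then for every continuous ψ : S → ℝ, both limits lim_{n→∞} ∫_T ∫_S ψ(Pⁿ(w)) dω_t(w) dν(t) and lim_{n→∞} ∫_T ∫_S ψ(Pⁿ(w)) dω′_t(w)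 dν(t) exist and are equal; i.e. the limit is independent of the chosen family of fiber measures. -/
/-!
Against a probability measure carried by a single fiber `π ⁻¹' {t}`, the integral of `ψ ∘ Pⁿ` is
determined up to the oscillation of `ψ` on `Pⁿ (π ⁻¹' {t})`, which tends to `0` uniformly in `t`
by uniform continuity of `ψ` and the fiber contraction. Hence any two fiber-concentrated families give
asymptotically equal double integrals. Applied to the families `t ↦ Pᵏ_* ω_t` and `t ↦ ω_{fᵏ t}`,
both carried by the fiber over `fᵏ t`, and using the `f`-invariance of `ν`, this shows that the
`n + k`-th and the `n`-th double integrals are uniformly close, so the sequence is Cauchy.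
-/

open MeasureTheory Filter Topology ProbabilityTheory Metric Set

section ConcentratedMeasure

variable {S E : Type*} [MeasurableSpace S] [NormedAddCommGroup E] [NormedSpace ℝ E]
  [CompleteSpace E] [MeasurableSpace E] [OpensMeasurableSpace E]
  {μ μ₁ μ₂ : Measure S} {g : S → E} {A : Set S}

theorem integral_mem_closedBall_of_measure_eq_one [IsProbabilityMeasure μ] (hg : Measurable g)
    (hgi : Integrable g μ) (hA : μ A = 1) {c : E} {r : ℝ}
    (hAg : ∀ x ∈ A, g x ∈ closedBall c r) :
    ∫ x, g x ∂μ ∈ closedBall c r := by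
  have hball : MeasurableSet (g ⁻¹' closedBall c r) := hg isClosed_closedBall.measurableSet
  have hfull : μ (g ⁻¹' closedBall c r) = 1 := le_antisymm prob_le_one (hA ▸ measure_mono hAg)
  exact (convex_closedBall c r).integral_mem isClosed_closedBall
    (mem_ae_iff.2 ((prob_compl_eq_zero_iff hball).2 hfull)) hgi

theorem dist_integral_le_of_measure_eq_one [IsProbabilityMeasure μ₁] [IsProbabilityMeasure μ₂]
    (hg : Measurable g) (hg₁ : Integrable g μ₁) (hg₂ : Integrable g μ₂)
    (h₁ : μ₁ A = 1) (h₂ : μ₂ A = 1) {ε : ℝ} (hAg : ∀ x ∈ A, ∀ y ∈ A, dist (g x) (g y) ≤ ε) :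
    dist (∫ x, g x ∂μ₁) (∫ x, g x ∂μ₂) ≤ 2 * ε := by
  obtain ⟨x₀, hx₀⟩ : A.Nonempty := nonempty_of_measure_ne_zero (by rw [h₁]; exact one_ne_zero)
  have hball : ∀ x ∈ A, g x ∈ closedBall (g x₀) ε := fun x hx => hAg x hx x₀ hx₀
  calc dist (∫ x, g x ∂μ₁) (∫ x, g x ∂μ₂)
      ≤ dist (∫ x, g x ∂μ₁) (g x₀) + dist (∫ x, g x ∂μ₂) (g x₀) := dist_triangle_right _ _ _
    _ ≤ ε + ε := add_le_add (integral_mem_closedBall_of_measure_eq_one hg hg₁ h₁ hball)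
        (integral_mem_closedBall_of_measure_eq_one hg hg₂ h₂ hball)
    _ = 2 * ε := (two_mul ε).symm

end ConcentratedMeasure

theorem dist_integral_le_of_forall_dist_le {α E : Type*} [MeasurableSpace α]
    [NormedAddCommGroup E] [NormedSpace ℝ E] {μ : Measure α} [IsProbabilityMeasure μ]
    {F₁ F₂ : α → E} (h₁ : Integrable F₁ μ) (h₂ : Integrable F₂ μ) {ε : ℝ}
    (h : ∀ x, dist (F₁ x) (F₂ x) ≤ ε) :
    dist (∫ x, F₁ x ∂μ) (∫ x, F₂ x ∂μ) ≤ ε := by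
  rw [dist_eq_norm, ← integral_sub h₁ h₂]
  simpa using norm_integral_le_of_norm_le_const (μ := μ)
    (ae_of_all μ fun x => (dist_eq_norm (F₁ x) (F₂ x)).symm.trans_le (h x))

theorem MeasureTheory.Measure.map_apply_eq_one_of_mapsTo {S S' : Type*} [MeasurableSpace S]
    [MeasurableSpace S'] {μ : Measure S} [IsProbabilityMeasure μ] {Φ : S → S'}
    (hΦ : AEMeasurable Φ μ) {s : Set S} {s' : Set S'} (hs : MapsTo Φ s s') (h : μ s = 1) :
    μ.map Φ s' = 1 := by
  have := isProbabilityMeasure_map hΦ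
  exact le_antisymm prob_le_one (h ▸ (measure_mono hs).trans (Measure.le_map_apply hΦ s'))

theorem ProbabilityTheory.Kernel.integrable_integral_of_bound {T S E : Type*}
    [MeasurableSpace T] [MeasurableSpace S] [NormedAddCommGroup E] [NormedSpace ℝ E]
    (κ : Kernel T S) [IsMarkovKernel κ] (ν : Measure T) [IsFiniteMeasure ν] {g : S → E}
    (hg : StronglyMeasurable g) {C : ℝ} (hgC : ∀ x, ‖g x‖ ≤ C) :
    Integrable (fun t => ∫ w, g w ∂κ t) ν :=
  .of_bound hg.integral_kernel.aestronglyMeasurable C <| ae_of_all ν fun t => by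
    simpa using norm_integral_le_of_norm_le_const (μ := κ t) (ae_of_all _ hgC)

theorem eventually_forall_dist_le_of_tendsto_iSup_ediam {α ι X S E : Type*}
    [PseudoMetricSpace S] [PseudoMetricSpace E] {ψ : S → E} (hψ : UniformContinuous ψ)
    {l : Filter α} {Φ : α → X → S} {A : ι → Set X}
    (hA : Tendsto (fun a => ⨆ i, ediam (Φ a '' A i)) l (𝓝 0)) {ε : ℝ} (hε : 0 < ε) :
    ∀ᶠ a in l, ∀ i, ∀ x ∈ A i, ∀ y ∈ A i, dist (ψ (Φ a x)) (ψ (Φ a y)) ≤ ε := by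
  obtain ⟨δ, hδ, hδψ⟩ := Metric.uniformContinuous_iff.1 hψ ε hε
  filter_upwards [hA.eventually (gt_mem_nhds (ENNReal.ofReal_pos.2 hδ))] with a ha i x hx y hy
  have hxy : edist (Φ a x) (Φ a y) < ENNReal.ofReal δ :=
    ((edist_le_ediam_of_mem (mem_image_of_mem _ hx) (mem_image_of_mem _ hy)).trans
      (le_iSup (fun i => ediam (Φ a '' A i)) i)).trans_lt ha
  exact (hδψ (edist_lt_ofReal.1 hxy)).le

theorem cauchySeq_of_eventually_forall_dist_add_le {X : Type*} [PseudoMetricSpace X]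
    {u : ℕ → X} (h : ∀ ε > 0, ∀ᶠ n in atTop, ∀ k, dist (u (n + k)) (u n) ≤ ε) :
    CauchySeq u := by
  refine Metric.cauchySeq_iff'.2 fun ε hε => ?_
  obtain ⟨N, hN⟩ := (h (ε / 2) (half_pos hε)).exists_forall_of_atTop
  refine ⟨N, fun n hn => ?_⟩
  have := hN N le_rfl (n - N)
  rw [Nat.add_sub_cancel' hn] at this
  linarith

theorem ProbabilityTheory.Kernel.integral_integral_map {T S X E : Type*} [MeasurableSpace T]
    [MeasurableSpace S] [MeasurableSpace X] [NormedAddCommGroup E] [NormedSpace ℝ E]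
    (κ : Kernel T S) (ν : Measure T) {Φ : S → X} (hΦ : Measurable Φ) {g : X → E}
    (hg : StronglyMeasurable g) :
    ∫ t, ∫ x, g x ∂κ.map Φ t ∂ν = ∫ t, ∫ w, g (Φ w) ∂κ t ∂ν := by
  simp only [Kernel.map_apply _ hΦ, integral_map hΦ.aemeasurable hg.aestronglyMeasurable]

theorem MeasureTheory.MeasurePreserving.integral_integral_comap {T S E : Type*}
    [MeasurableSpace T] [MeasurableSpace S] [NormedAddCommGroup E] [NormedSpace ℝ E]
    {f : T → T} {ν : Measure T} (hf : MeasurePreserving f ν ν) (κ : Kernel T S) {g : S → E}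
    (hg : StronglyMeasurable g) :
    ∫ t, ∫ w, g w ∂κ.comap f hf.measurable t ∂ν = ∫ t, ∫ w, g w ∂κ t ∂ν := by
  have hF : AEStronglyMeasurable (fun t => ∫ w, g w ∂κ t) (ν.map f) :=
    hf.map_eq ▸ hg.integral_kernel.aestronglyMeasurable
  simp only [Kernel.comap_apply]
  rw [← integral_map hf.measurable.aemeasurable hF, hf.map_eq]

section Fibration

variable {S T : Type*} [MetricSpace S] [CompactSpace S] [MeasurableSpace S] [BorelSpace S]
  {P : S → S} {π : S → T}

theorem eventually_dist_integral_comp_iterate_le (hP : Measurable P)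
    (hcontr : Tendsto (fun n : ℕ => ⨆ t : T, ediam (P^[n] '' (π ⁻¹' {t}))) atTop (𝓝 0))
    (ψ : C(S, ℝ)) {ε : ℝ} (hε : 0 < ε) :
    ∀ᶠ n in atTop, ∀ t (μ₁ μ₂ : Measure S) [IsProbabilityMeasure μ₁] [IsProbabilityMeasure μ₂],
      μ₁ (π ⁻¹' {t}) = 1 → μ₂ (π ⁻¹' {t}) = 1 →
      dist (∫ w, ψ (P^[n] w) ∂μ₁) (∫ w, ψ (P^[n] w) ∂μ₂) ≤ ε := by
  filter_upwards [eventually_forall_dist_le_of_tendsto_iSup_ediam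
    (CompactSpace.uniformContinuous_of_continuous ψ.continuous) hcontr (half_pos hε)]
    with n hn t μ₁ μ₂ _ _ h₁ h₂
  have hg : Measurable fun w => ψ (P^[n] w) := ψ.continuous.measurable.comp (hP.iterate n)
  have hint (μ : Measure S) [IsProbabilityMeasure μ] : Integrable (fun w => ψ (P^[n] w)) μ :=
    .of_bound hg.aestronglyMeasurable ‖ψ‖ (ae_of_all _ fun w => ψ.norm_coe_le_norm _)
  exact (dist_integral_le_of_measure_eq_one hg (hint μ₁) (hint μ₂) h₁ h₂ (hn t)).trans_eq
    (by ring)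

variable [MeasurableSpace T]

theorem eventually_dist_integral_integral_comp_iterate_le (hP : Measurable P)
    (hcontr : Tendsto (fun n : ℕ => ⨆ t : T, ediam (P^[n] '' (π ⁻¹' {t}))) atTop (𝓝 0))
    (ψ : C(S, ℝ)) (ν : Measure T) [IsProbabilityMeasure ν] {ε : ℝ} (hε : 0 < ε) :
    ∀ᶠ n in atTop, ∀ (σ : T → T) (κ₁ κ₂ : Kernel T S) [IsMarkovKernel κ₁] [IsMarkovKernel κ₂],
      (∀ t, κ₁ t (π ⁻¹' {σ t}) = 1) → (∀ t, κ₂ t (π ⁻¹' {σ t}) = 1) →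
      dist (∫ t, ∫ w, ψ (P^[n] w) ∂κ₁ t ∂ν) (∫ t, ∫ w, ψ (P^[n] w) ∂κ₂ t ∂ν) ≤ ε := by
  filter_upwards [eventually_dist_integral_comp_iterate_le hP hcontr ψ hε]
    with n hn σ κ₁ κ₂ _ _ h₁ h₂
  have hg : StronglyMeasurable fun w => ψ (P^[n] w) :=
    (ψ.continuous.measurable.comp (hP.iterate n)).stronglyMeasurable
  have hbound (w : S) : ‖ψ (P^[n] w)‖ ≤ ‖ψ‖ := ψ.norm_coe_le_norm _
  exact dist_integral_le_of_forall_dist_le (κ₁.integrable_integral_of_bound ν hg hbound)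
    (κ₂.integrable_integral_of_bound ν hg hbound) fun t => hn (σ t) (κ₁ t) (κ₂ t) (h₁ t) (h₂ t)

theorem tendsto_dist_integral_integral_comp_iterate (hP : Measurable P)
    (hcontr : Tendsto (fun n : ℕ => ⨆ t : T, ediam (P^[n] '' (π ⁻¹' {t}))) atTop (𝓝 0))
    (ψ : C(S, ℝ)) (ν : Measure T) [IsProbabilityMeasure ν] (κ₁ κ₂ : Kernel T S)
    [IsMarkovKernel κ₁] [IsMarkovKernel κ₂] (h₁ : ∀ t, κ₁ t (π ⁻¹' {t}) = 1)
    (h₂ : ∀ t, κ₂ t (π ⁻¹' {t}) = 1) :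
    Tendsto (fun n => dist (∫ t, ∫ w, ψ (P^[n] w) ∂κ₁ t ∂ν) (∫ t, ∫ w, ψ (P^[n] w) ∂κ₂ t ∂ν))
      atTop (𝓝 0) := by
  refine tendsto_order.2 ⟨fun a ha => .of_forall fun n => ha.trans_le dist_nonneg, fun a ha => ?_⟩
  filter_upwards [eventually_dist_integral_integral_comp_iterate_le hP hcontr ψ ν (half_pos ha)]
    with n hn
  exact (hn id κ₁ κ₂ h₁ h₂).trans_lt (half_lt_self ha)

theorem cauchySeq_integral_integral_comp_iterate (hP : Measurable P)
    (hcontr : Tendsto (fun n : ℕ => ⨆ t : T, ediam (P^[n] '' (π ⁻¹' {t}))) atTop (𝓝 0))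
    {f : T → T} (hsemi : Function.Semiconj π P f) (ψ : C(S, ℝ)) {ν : Measure T}
    [IsProbabilityMeasure ν] (hν : MeasurePreserving f ν ν) (κ : Kernel T S) [IsMarkovKernel κ]
    (hκ : ∀ t, κ t (π ⁻¹' {t}) = 1) :
    CauchySeq fun n => ∫ t, ∫ w, ψ (P^[n] w) ∂κ t ∂ν := by
  refine cauchySeq_of_eventually_forall_dist_add_le fun ε hε => ?_
  filter_upwards [eventually_dist_integral_integral_comp_iterate_le hP hcontr ψ ν hε] with n hn k
  have := Kernel.IsMarkovKernel.map κ (hP.iterate k)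
  have hg : StronglyMeasurable fun w => ψ (P^[n] w) :=
    (ψ.continuous.measurable.comp (hP.iterate n)).stronglyMeasurable
  have hshift : ∫ t, ∫ w, ψ (P^[n + k] w) ∂κ t ∂ν =
      ∫ t, ∫ w, ψ (P^[n] w) ∂κ.map P^[k] t ∂ν := by
    simp only [Function.iterate_add_apply]
    exact (κ.integral_integral_map ν (hP.iterate k) hg).symm
  rw [hshift, ← (hν.iterate k).integral_integral_comap κ hg]
  refine hn f^[k] _ _ (fun t => ?_) fun t => hκ (f^[k] t)
  rw [Kernel.map_apply _ (hP.iterate k)]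
  exact Measure.map_apply_eq_one_of_mapsTo (hP.iterate k).aemeasurable
    ((hsemi.iterate_right k).mapsTo_preimage (mapsTo_singleton.2 rfl)) (hκ t)

end Fibration

theorem limit_independent_of_fiber_measures_general
    {S T : Type*} [MetricSpace S] [CompactSpace S]
    [MeasurableSpace S] [BorelSpace S]
    [MeasurableSpace T]
    (P : S → S) (hP : Measurable P)
    (π : S → T)
    (f : T → T) (hf : Measurable f) (hcomm : f ∘ π = π ∘ P)
    (hcontr : Tendsto (fun n : ℕ => ⨆ t : T, EMetric.diam (P^[n] '' (π ⁻¹' {t})))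
      atTop (𝓝 0))
    (ν : Measure T) [IsProbabilityMeasure ν] (hinv : Measure.map f ν = ν)
    (ω ω' : T → Measure S) (hω : Measurable ω) (hω' : Measurable ω')
    (hωprob : ∀ t, IsProbabilityMeasure (ω t))
    (hω'prob : ∀ t, IsProbabilityMeasure (ω' t))
    (hωfib : ∀ t, ω t (π ⁻¹' {t}) = 1)
    (hω'fib : ∀ t, ω' t (π ⁻¹' {t}) = 1) :
    ∀ ψ : C(S, ℝ), ∃ c : ℝ,
      Tendsto (fun n : ℕ => ∫ t, ∫ w, ψ (P^[n] w) ∂(ω t) ∂ν) atTop (𝓝 c) ∧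
      Tendsto (fun n : ℕ => ∫ t, ∫ w, ψ (P^[n] w) ∂(ω' t) ∂ν) atTop (𝓝 c) := by
  intro ψ
  let κ : Kernel T S := ⟨ω, hω⟩
  let κ' : Kernel T S := ⟨ω', hω'⟩
  have : IsMarkovKernel κ := ⟨hωprob⟩
  have : IsMarkovKernel κ' := ⟨hω'prob⟩
  have hsemi : Function.Semiconj π P f := fun x => (congrFun hcomm x).symm
  obtain ⟨c, hc⟩ := cauchySeq_tendsto_of_complete
    (cauchySeq_integral_integral_comp_iterate hP hcontr hsemi ψ ⟨hf, hinv⟩ κ hωfib)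
  exact ⟨c, hc, hc.congr_dist
    (tendsto_dist_integral_integral_comp_iterate hP hcontr ψ ν κ κ' hωfib hω'fib)⟩

/-- independence of the limit from the disintegration. In the
setting of a uniformly contracting fibration `π : S → T` over an
`f`-invariant probability `ν`, for any two Markov kernels `(ω_t)`, `(ω′_t)`
of probability measures concentrated on the fibers, the limits
`lim_n ∫∫ ψ(Pⁿ(w)) dω_t(w) dν(t)` and `lim_n ∫∫ ψ(Pⁿ(w)) dω′_t(w) dν(t)`
exist and coincide, for every continuous `ψ : S → ℝ`. -/
theorem limit_independent_of_fiber_measures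
    {S T : Type*} [MetricSpace S] [CompactSpace S]
    [MeasurableSpace S] [BorelSpace S]
    [MetricSpace T] [MeasurableSpace T] [BorelSpace T]
    (P : S → S) (hP : Measurable P)
    (π : S → T) (hπ : Measurable π) (hπsurj : Function.Surjective π)
    (f : T → T) (hf : Measurable f) (hcomm : f ∘ π = π ∘ P)
    (hcontr : Tendsto (fun n : ℕ => ⨆ t : T, EMetric.diam (P^[n] '' (π ⁻¹' {t})))
      atTop (𝓝 0))
    (ν : Measure T) [IsProbabilityMeasure ν] (hinv : Measure.map f ν = ν)
    (ω ω' : T → Measure S) (hω : Measurable ω) (hω' : Measurable ω')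
    (hωprob : ∀ t, IsProbabilityMeasure (ω t))
    (hω'prob : ∀ t, IsProbabilityMeasure (ω' t))
    (hωfib : ∀ t, ω t (π ⁻¹' {t}) = 1)
    (hω'fib : ∀ t, ω' t (π ⁻¹' {t}) = 1) :
    ∀ ψ : C(S, ℝ), ∃ c : ℝ,
      Tendsto (fun n : ℕ => ∫ t, ∫ w, ψ (P^[n] w) ∂(ω t) ∂ν) atTop (𝓝 c) ∧
      Tendsto (fun n : ℕ => ∫ t, ∫ w, ψ (P^[n] w) ∂(ω' t) ∂ν) atTop (𝓝 c) :=
  limit_independent_of_fiber_measures_general P hP π f hf hcomm hcontr ν hinv ω ω' hω hω' hωprob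
    hω'prob hωfib hω'fib
end
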